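/- For positions P and Q, P → Q is a chomp move if and only if P^T → Q^T is a chomp move; consequently Mov(P^T) = {Q^T : Q ∈ Mov P}. -/

import Mathlib

/-- A position: a nonincreasing list of positive naturals (trailing zeros removed). -/
def IsPos (P : List ℕ) : Prop := P.Pairwise (· ≥ ·) ∧ ∀ a ∈ P, 0 < a

/-- The result of chomping position `P`, keeping the first `x` entries and
truncating all later entries to at most `a` (then removing zeros). -/
def chompAt (P : List ℕ) (x a : ℕ) : List ℕ :=
  (P.take x ++ (P.drop x).map (fun b => min b a)).filter (fun b => 0 < b)

/-- A chomp move from `P` to `Q`. -/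
def ChompMove (P Q : List ℕ) : Prop :=
  ∃ x a : ℕ, x < P.length ∧ Q = chompAt P x a ∧ Q ≠ P

/-- The conjugate (transposed) partition: `(transpose P)_i = #{j : P_j ≥ i+1}`. -/
def transpose (P : List ℕ) : List ℕ :=
  (List.range P.headI).map (fun i => P.countP (fun a => i + 1 ≤ a))

/-!
Encode a position `P` by its counting function `countGE P c = #{j | c ≤ P_j}`: for a
nonincreasing `P`, `i < countGE P (k + 1)` says exactly that the cell `(i, k)` lies in the
diagram of `P`, and for `Pᵀ` the roles of `i` and `k` are exchanged. Chomping at `(x, a)` keeps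
the cells with `i < x` or `k < a`, a condition symmetric under `(i, x) ↔ (k, a)`, so
`(chompAt P x a)ᵀ = chompAt Pᵀ a x`. As conjugation is an involution on positions, it carries the
moves of `P` bijectively onto those of `Pᵀ`.
-/

def countGE (L : List ℕ) (c : ℕ) : ℕ := L.countP (c ≤ ·)

@[simp]
theorem length_transpose (L : List ℕ) : (transpose L).length = L.headI := by
  simp [transpose]

theorem pairwise_transpose (L : List ℕ) : (transpose L).Pairwise (· ≥ ·) := by
  refine List.pairwise_map.mpr (List.pairwise_lt_range.imp fun hij => ?_)
  exact List.countP_mono_left fun b _ h => by simp only [decide_eq_true_eq] at h ⊢; omega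

theorem isPos_transpose (L : List ℕ) : IsPos (transpose L) := by
  refine ⟨pairwise_transpose L, fun b hb => ?_⟩
  obtain ⟨i, hi, rfl⟩ := List.mem_map.mp hb
  cases L with
  | nil => simp at hi
  | cons p t => exact List.countP_pos_iff.mpr ⟨p, List.mem_cons_self, by simpa using hi⟩

section Sorted

variable {L : List ℕ}

theorem le_headI_of_mem (hs : L.Pairwise (· ≥ ·)) {b : ℕ} (hb : b ∈ L) : b ≤ L.headI := by
  cases L with
  | nil => simp at hb
  | cons p t =>
    rcases List.mem_cons.mp hb with rfl | hb
    · exact le_rfl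
    · exact List.rel_of_pairwise_cons hs hb

theorem getD_le_headI (hs : L.Pairwise (· ≥ ·)) (i : ℕ) : L.getD i 0 ≤ L.headI := by
  rcases lt_or_ge i L.length with hi | hi
  · rw [List.getD_eq_getElem _ _ hi]
    exact le_headI_of_mem hs (List.getElem_mem hi)
  · rw [List.getD_eq_default _ _ hi]; exact Nat.zero_le _

theorem countGE_eq_zero_of_headI_lt (hs : L.Pairwise (· ≥ ·)) {c : ℕ} (hc : L.headI < c) :
    countGE L c = 0 :=
  List.countP_eq_zero.mpr fun b hb => by simpa using hc.trans_le' (le_headI_of_mem hs hb)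

theorem lt_countGE_iff (hs : L.Pairwise (· ≥ ·)) {c : ℕ} (hc : 0 < c) (i : ℕ) :
    i < countGE L c ↔ c ≤ L.getD i 0 := by
  induction L generalizing i with
  | nil => simpa [countGE] using hc.ne'
  | cons p t ih =>
    have hcount : countGE (p :: t) c = countGE t c + if c ≤ p then 1 else 0 := by
      simp [countGE, List.countP_cons]
    by_cases hcp : c ≤ p
    · cases i with
      | zero => simp [hcount, hcp]
      | succ j => simp [hcount, hcp, ih hs.of_cons]
    · have hzero : countGE (p :: t) c = 0 := countGE_eq_zero_of_headI_lt hs (by simpa using hcp)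
      have hget := getD_le_headI hs i
      simp only [List.headI_cons] at hget
      omega

theorem countGE_take (hs : L.Pairwise (· ≥ ·)) {c : ℕ} (hc : 0 < c) (x : ℕ) :
    countGE (L.take x) c = min x (countGE L c) := by
  refine eq_of_forall_lt_iff fun i => ?_
  rw [lt_countGE_iff (hs.sublist (List.take_sublist x L)) hc, lt_min_iff, lt_countGE_iff hs hc]
  simp only [List.getD_eq_getElem?_getD, List.getElem?_take]
  split_ifs with hi <;> simp [hi, hc.ne']

theorem getD_transpose (hs : L.Pairwise (· ≥ ·)) (k : ℕ) :
    (transpose L).getD k 0 = countGE L (k + 1) := by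
  rcases lt_or_ge k L.headI with hk | hk
  · simp [transpose, countGE, List.getD_eq_getElem?_getD, hk]
  · rw [List.getD_eq_default _ _ (by rwa [length_transpose]),
      countGE_eq_zero_of_headI_lt hs (Nat.lt_succ_of_le hk)]

theorem lt_countGE_transpose_iff (hs : L.Pairwise (· ≥ ·)) (i k : ℕ) :
    k < countGE (transpose L) (i + 1) ↔ i < countGE L (k + 1) := by
  rw [lt_countGE_iff (pairwise_transpose L) i.add_one_pos, getD_transpose hs]
  rfl

end Sorted

theorem countGE_chompAt {P : List ℕ} (hs : P.Pairwise (· ≥ ·)) {c : ℕ} (hc : 0 < c) (x a : ℕ) :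
    countGE (chompAt P x a) c = if c ≤ a then countGE P c else min x (countGE P c) := by
  have hfilter : countGE (chompAt P x a) c
      = countGE (P.take x) c + countGE ((P.drop x).map (min · a)) c := by
    simp only [countGE, chompAt, List.countP_filter, List.countP_append]
    congr 1 <;> refine List.countP_congr fun b _ => ?_ <;> simp <;> omega
  have hdrop : countGE ((P.drop x).map (min · a)) c
      = if c ≤ a then countGE (P.drop x) c else 0 := by
    simp only [countGE, List.countP_map]
    split_ifs with hca
    · exact List.countP_congr fun b _ => by simp; omega
    · exact List.countP_eq_zero.mpr fun b _ => by simp; omega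
  have hsplit : countGE P c = countGE (P.take x) c + countGE (P.drop x) c := by
    simp only [countGE]; rw [← List.countP_append, List.take_append_drop]
  have htake := countGE_take hs hc x
  rw [hfilter, hdrop]
  split_ifs <;> omega

theorem isPos_chompAt {P : List ℕ} (hP : IsPos P) (x a : ℕ) : IsPos (chompAt P x a) := by
  refine ⟨List.Pairwise.filter _ ?_, fun b hb => by simpa using (List.mem_filter.mp hb).2⟩
  have hs : (P.take x ++ P.drop x).Pairwise (· ≥ ·) := by rw [List.take_append_drop]; exact hP.1
  obtain ⟨htake, hdrop, hcross⟩ := List.pairwise_append.mp hs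
  refine List.pairwise_append.mpr ⟨htake, List.pairwise_map.mpr (hdrop.imp ?_), ?_⟩
  · exact fun h => min_le_min_right a h
  · simp only [List.mem_map]
    rintro u hu _ ⟨w, hw, rfl⟩
    exact (min_le_left w a).trans (hcross u hu w hw)

theorem countGE_one {P : List ℕ} (hP : IsPos P) : countGE P 1 = P.length :=
  List.countP_eq_length.mpr fun b hb => decide_eq_true (hP.2 b hb)

theorem eq_of_countGE_eq {P Q : List ℕ} (hP : IsPos P) (hQ : IsPos Q)
    (h : ∀ k, countGE P (k + 1) = countGE Q (k + 1)) : P = Q := by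
  have hgetD : ∀ i, P.getD i 0 = Q.getD i 0 := fun i => eq_of_forall_lt_iff fun k => by
    rw [Nat.lt_iff_add_one_le, Nat.lt_iff_add_one_le, ← lt_countGE_iff hP.1 k.add_one_pos,
      ← lt_countGE_iff hQ.1 k.add_one_pos, h]
  have hlength : P.length = Q.length := by rw [← countGE_one hP, ← countGE_one hQ, h]
  refine List.ext_getElem hlength fun i hiP hiQ => ?_
  rw [← List.getD_eq_getElem _ 0, ← List.getD_eq_getElem _ 0, hgetD]

theorem transpose_chompAt {P : List ℕ} (hP : IsPos P) (x a : ℕ) :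
    transpose (chompAt P x a) = chompAt (transpose P) a x := by
  refine eq_of_countGE_eq (isPos_transpose _) (isPos_chompAt (isPos_transpose P) a x)
    fun i => eq_of_forall_lt_iff fun k => ?_
  rw [lt_countGE_transpose_iff (isPos_chompAt hP x a).1, countGE_chompAt hP.1 k.add_one_pos,
    countGE_chompAt (pairwise_transpose P) i.add_one_pos]
  have := lt_countGE_transpose_iff hP.1 i k
  split_ifs <;> omega

theorem transpose_transpose {P : List ℕ} (hP : IsPos P) : transpose (transpose P) = P :=
  eq_of_countGE_eq (isPos_transpose _) hP fun i => eq_of_forall_lt_iff fun k => by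
    rw [lt_countGE_transpose_iff (pairwise_transpose P), lt_countGE_transpose_iff hP.1]

theorem chompAt_eq_self {P : List ℕ} (hP : IsPos P) (x : ℕ) {a : ℕ} (ha : P.headI ≤ a) :
    chompAt P x a = P := by
  have hmin : (P.drop x).map (min · a) = P.drop x :=
    (List.map_congr_left fun b hb =>
      min_eq_left ((le_headI_of_mem hP.1 (List.mem_of_mem_drop hb)).trans ha)).trans
      (List.map_id _)
  rw [chompAt, hmin, List.take_append_drop, List.filter_eq_self]
  exact fun b hb => decide_eq_true (hP.2 b hb)

theorem ChompMove.isPos {P Q : List ℕ} (hP : IsPos P) (h : ChompMove P Q) : IsPos Q := by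
  obtain ⟨x, a, -, rfl, -⟩ := h
  exact isPos_chompAt hP x a

theorem ChompMove.transpose {P Q : List ℕ} (hP : IsPos P) (h : ChompMove P Q) :
    ChompMove (transpose P) (transpose Q) := by
  obtain ⟨x, a, -, rfl, hne⟩ := h
  refine ⟨a, x, ?_, transpose_chompAt hP x a, fun heq => hne ?_⟩
  · rw [length_transpose]
    by_contra! ha
    exact hne (chompAt_eq_self hP x ha)
  · rw [← transpose_transpose (isPos_chompAt hP x a), heq, transpose_transpose hP]

/-- `P → Q` iff `Pᵀ → Qᵀ`; consequently `Mov (Pᵀ) = {Qᵀ : Q ∈ Mov P}`. -/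
theorem chompMove_transpose :
    (∀ P Q : List ℕ, IsPos P → IsPos Q →
      (ChompMove P Q ↔ ChompMove (transpose P) (transpose Q))) ∧
    (∀ P : List ℕ, IsPos P →
      {R | ChompMove (transpose P) R} = transpose '' {Q | ChompMove P Q}) := by
  have move_iff : ∀ P Q : List ℕ, IsPos P → IsPos Q →
      (ChompMove P Q ↔ ChompMove (transpose P) (transpose Q)) := fun P Q hP hQ =>
    ⟨ChompMove.transpose hP, fun h => by
      simpa only [transpose_transpose hP, transpose_transpose hQ] using
        h.transpose (isPos_transpose P)⟩
  refine ⟨move_iff, fun P hP => Set.ext fun R => ⟨fun hR => ?_, ?_⟩⟩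
  · have hRpos := hR.isPos (isPos_transpose P)
    refine ⟨transpose R, (move_iff P _ hP (isPos_transpose R)).mpr ?_, transpose_transpose hRpos⟩
    rwa [transpose_transpose hRpos]
  · rintro ⟨Q, hQ, rfl⟩
    exact hQ.transpose hP
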